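/- arXiv:1308.0586 — 2 statements merged into one kernel-verified Lean document; each statement's English description precedes it below -/
import Mathlib

section
/- Let f : ℝⁿ → ℝⁿ be C¹ with μ(J(x)) ≤ −c < 0 for all x, and suppose f is a bijection of ℝⁿ onto itself with unique zero x*. Then V(x) = |f(x)| is positive definite with respect to x* (V(x*) = 0 and V(x) > 0 for x ≠ x*) and radially unbounded (|x| → ∞ implies V(x) → ∞), and along any trajectory of ẋ = f(x), V decreases: V(x(t)) ≤ V(x(0)) e^{−ct}. -/
/-!
Positive definiteness is injectivity of `f`. Testing `‖I + hA‖` on a unit vector `v` gives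
`μ(A) ≥ -N(Av)`, so `μ(J) ≤ -c < 0` makes every Jacobian invertible; by the inverse function
theorem the continuous bijection `f` is open, hence a homeomorphism, and the preimages under `f` of
the compact sublevel sets of `N` are compact, which is radial unboundedness.
Along a trajectory, `u = f ∘ x` solves `u' = J(x) u`. From `u(t + h) = (I + hJ) u(t) + o(h)`, the
right difference quotients of `N ∘ u` are eventually below `μ(J) N(u) + ε ≤ -c N(u) + ε`, and
Grönwall's inequality gives the exponential bound.
-/

open Matrix Filter Set Topology

/-- `N` is a norm on `ℝⁿ`. -/
def IsNorm {n : ℕ} (N : (Fin n → ℝ) → ℝ) : Prop :=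
  (∀ v, N v = 0 ↔ v = 0) ∧
  (∀ (c : ℝ) v, N (c • v) = |c| * N v) ∧
  (∀ u v, N (u + v) ≤ N u + N v)

/-- Operator (induced matrix) norm of `A` with respect to the vector norm `N`. -/
noncomputable def opNorm {n : ℕ} (N : (Fin n → ℝ) → ℝ)
    (A : Matrix (Fin n) (Fin n) ℝ) : ℝ :=
  sSup ((fun v => N (A.mulVec v)) '' {v | N v ≤ 1})

/-- Matrix measure (logarithmic norm): `μ(A) = lim_{h→0⁺} (‖I + hA‖ − 1)/h`. -/
noncomputable def matMeasure {n : ℕ} (N : (Fin n → ℝ) → ℝ)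
    (A : Matrix (Fin n) (Fin n) ℝ) : ℝ :=
  limUnder (𝓝[>] (0:ℝ)) (fun h => (opNorm N (1 + h • A) - 1) / h)

/-- The Jacobian matrix of `f` at `x`. -/
noncomputable def jac {n : ℕ} (f : (Fin n → ℝ) → (Fin n → ℝ)) (x : Fin n → ℝ) :
    Matrix (Fin n) (Fin n) ℝ :=
  LinearMap.toMatrix' (fderiv ℝ f x).toLinearMap

/-- Upper right Dini derivative. -/
noncomputable def diniUpper (φ : ℝ → ℝ) (t : ℝ) : ℝ :=
  limsup (fun h => (φ (t + h) - φ t) / h) (𝓝[>] (0:ℝ))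

namespace IsNorm

variable {n : ℕ} {N : (Fin n → ℝ) → ℝ}

theorem map_zero (hN : IsNorm N) : N 0 = 0 := (hN.1 0).2 rfl

theorem map_smul_of_nonneg (hN : IsNorm N) {a : ℝ} (ha : 0 ≤ a) (v : Fin n → ℝ) :
    N (a • v) = a * N v := by
  rw [hN.2.1, abs_of_nonneg ha]

theorem map_neg (hN : IsNorm N) (v : Fin n → ℝ) : N (-v) = N v := by
  simpa using hN.2.1 (-1) v

theorem nonneg (hN : IsNorm N) (v : Fin n → ℝ) : 0 ≤ N v := by
  have := hN.2.2 v (-v)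
  rw [add_neg_cancel, hN.map_zero, hN.map_neg] at this
  linarith

theorem pos (hN : IsNorm N) {v : Fin n → ℝ} (hv : v ≠ 0) : 0 < N v :=
  (hN.nonneg v).lt_of_ne' (mt (hN.1 v).1 hv)

theorem sub_le (hN : IsNorm N) (u v : Fin n → ℝ) : N u - N v ≤ N (u - v) := by
  have := hN.2.2 (u - v) v
  rw [sub_add_cancel] at this
  linarith

theorem map_inv_smul_self (hN : IsNorm N) {v : Fin n → ℝ} (hv : v ≠ 0) :
    N ((N v)⁻¹ • v) = 1 := by
  rw [hN.map_smul_of_nonneg (inv_nonneg.2 (hN.nonneg v)), inv_mul_cancel₀ (hN.pos hv).ne']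

theorem exists_le_mul_norm (hN : IsNorm N) : ∃ C, ∀ v, N v ≤ C * ‖v‖ := by
  classical
  refine ⟨∑ i, N (Pi.single i 1), fun v => ?_⟩
  calc N v = N (∑ i, v i • Pi.single i 1) := by
        congr 1; ext j; simp [Pi.single_apply]
    _ ≤ ∑ i, N (v i • Pi.single i 1) :=
        Finset.le_sum_of_subadditive N hN.map_zero.le hN.2.2 _ _
    _ = ∑ i, ‖v i‖ * N (Pi.single i 1) := by simp only [hN.2.1, Real.norm_eq_abs]
    _ ≤ ∑ i, ‖v‖ * N (Pi.single i 1) :=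
        Finset.sum_le_sum fun i _ => mul_le_mul_of_nonneg_right (norm_le_pi_norm v i) (hN.nonneg _)
    _ = (∑ i, N (Pi.single i 1)) * ‖v‖ := by rw [← Finset.mul_sum, mul_comm]

theorem continuous (hN : IsNorm N) : Continuous N := by
  obtain ⟨C, hC⟩ := hN.exists_le_mul_norm
  refine (LipschitzWith.of_le_add_mul' C fun u v => ?_).continuous
  have := hC (u - v)
  rw [dist_eq_norm]
  linarith [hN.sub_le u v]

theorem exists_pos_mul_norm_le (hN : IsNorm N) : ∃ m > 0, ∀ v, m * ‖v‖ ≤ N v := by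
  obtain ⟨m, hm, hmS⟩ := (isCompact_sphere (0 : Fin n → ℝ) 1).exists_forall_le'
    hN.continuous.continuousOn fun v hv => hN.pos (ne_zero_of_mem_sphere one_ne_zero ⟨v, hv⟩)
  refine ⟨m, hm, fun v => ?_⟩
  rcases eq_or_ne v 0 with rfl | hv
  · simp [hN.map_zero]
  have hv' : 0 < ‖v‖ := norm_pos_iff.2 hv
  have := hmS (‖v‖⁻¹ • v) (by simp [norm_smul, hv'.ne'])
  rw [hN.map_smul_of_nonneg (by positivity), le_inv_mul_iff₀ hv'] at this
  linarith

theorem isCompact_setOf_le (hN : IsNorm N) (M : ℝ) : IsCompact {v | N v ≤ M} := by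
  obtain ⟨m, hm, hmN⟩ := hN.exists_pos_mul_norm_le
  refine Metric.isCompact_of_isClosed_isBounded (isClosed_le hN.continuous continuous_const) ?_
  refine (Metric.isBounded_iff_subset_closedBall 0).2 ⟨M / m, fun v hv => ?_⟩
  rw [mem_closedBall_zero_iff, le_div_iff₀ hm, mul_comm]
  exact (hmN v).trans hv

theorem le_opNorm (hN : IsNorm N) (A : Matrix (Fin n) (Fin n) ℝ) {v : Fin n → ℝ}
    (hv : N v ≤ 1) : N (A *ᵥ v) ≤ opNorm N A :=
  le_csSup ((hN.isCompact_setOf_le 1).bddAbove_image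
    (hN.continuous.comp (continuous_const.matrix_mulVec continuous_id)).continuousOn) ⟨v, hv, rfl⟩

theorem opNorm_le (hN : IsNorm N) {A : Matrix (Fin n) (Fin n) ℝ} {b : ℝ}
    (hb : ∀ v, N v ≤ 1 → N (A *ᵥ v) ≤ b) : opNorm N A ≤ b :=
  csSup_le ⟨_, 0, by simp [hN.map_zero], rfl⟩ (by rintro _ ⟨v, hv, rfl⟩; exact hb v hv)

theorem le_opNorm_mul (hN : IsNorm N) (A : Matrix (Fin n) (Fin n) ℝ) (v : Fin n → ℝ) :
    N (A *ᵥ v) ≤ opNorm N A * N v := by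
  rcases eq_or_ne v 0 with rfl | hv
  · simp [hN.map_zero]
  have := hN.le_opNorm A (hN.map_inv_smul_self hv).le
  rwa [Matrix.mulVec_smul, hN.map_smul_of_nonneg (inv_nonneg.2 (hN.nonneg v)),
    inv_mul_le_iff₀ (hN.pos hv), mul_comm] at this

end IsNorm

noncomputable def matMeasureQuot {n : ℕ} (N : (Fin n → ℝ) → ℝ)
    (A : Matrix (Fin n) (Fin n) ℝ) (h : ℝ) : ℝ :=
  (opNorm N (1 + h • A) - 1) / h

theorem Matrix.one_add_smul_mulVec {n : ℕ} (A : Matrix (Fin n) (Fin n) ℝ) (h : ℝ)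
    (v : Fin n → ℝ) : (1 + h • A) *ᵥ v = v + h • A *ᵥ v := by
  rw [Matrix.add_mulVec, Matrix.one_mulVec, Matrix.smul_mulVec]

namespace IsNorm

variable {n : ℕ} {N : (Fin n → ℝ) → ℝ}

/-- `h ↦ ‖I + hA‖` is convex with value `1` at `0`, so its difference quotients at `0` increase. -/
theorem monotoneOn_matMeasureQuot (hN : IsNorm N) (A : Matrix (Fin n) (Fin n) ℝ) :
    MonotoneOn (matMeasureQuot N A) (Ioi 0) := by
  rintro h₁ (h₁pos : 0 < h₁) h₂ (h₂pos : 0 < h₂) h12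
  set θ := h₁ / h₂
  have hθ₀ : 0 ≤ θ := by positivity
  have hθ₁ : 0 ≤ 1 - θ := sub_nonneg.2 (div_le_one_of_le₀ h12 h₂pos.le)
  have hh₁ : h₁ = θ * h₂ := (div_mul_cancel₀ _ h₂pos.ne').symm
  have hconv : opNorm N (1 + h₁ • A) ≤ (1 - θ) + θ * opNorm N (1 + h₂ • A) := by
    refine hN.opNorm_le fun v hv => ?_
    have hsplit : (1 + h₁ • A) *ᵥ v = (1 - θ) • v + θ • ((1 + h₂ • A) *ᵥ v) := by
      rw [Matrix.one_add_smul_mulVec, Matrix.one_add_smul_mulVec, hh₁]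
      module
    calc N ((1 + h₁ • A) *ᵥ v) ≤ (1 - θ) * N v + θ * N ((1 + h₂ • A) *ᵥ v) := by
          rw [hsplit, ← hN.map_smul_of_nonneg hθ₁, ← hN.map_smul_of_nonneg hθ₀]
          exact hN.2.2 _ _
      _ ≤ (1 - θ) * 1 + θ * opNorm N (1 + h₂ • A) := by
          gcongr
          exact hN.le_opNorm _ hv
      _ = (1 - θ) + θ * opNorm N (1 + h₂ • A) := by ring
  rw [matMeasureQuot, matMeasureQuot, div_le_div_iff₀ h₁pos h₂pos]
  calc (opNorm N (1 + h₁ • A) - 1) * h₂ ≤ θ * (opNorm N (1 + h₂ • A) - 1) * h₂ := by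
        gcongr
        linarith
    _ = (opNorm N (1 + h₂ • A) - 1) * h₁ := by rw [hh₁]; ring

theorem neg_le_matMeasureQuot (hN : IsNorm N) (A : Matrix (Fin n) (Fin n) ℝ) {v : Fin n → ℝ}
    (hv : N v = 1) {h : ℝ} (hh : 0 < h) : -N (A *ᵥ v) ≤ matMeasureQuot N A h := by
  have hle := hN.le_opNorm (1 + h • A) hv.le
  have htri := hN.sub_le v (-(h • A *ᵥ v))
  rw [sub_neg_eq_add, hN.map_neg, hN.map_smul_of_nonneg hh.le, hv] at htri
  rw [Matrix.one_add_smul_mulVec] at hle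
  rw [matMeasureQuot, le_div_iff₀ hh]
  linarith

/-- For `n = 0` the quotient is `-1 / h`, which has no limit. -/
theorem tendsto_matMeasureQuot [Nonempty (Fin n)] (hN : IsNorm N)
    (A : Matrix (Fin n) (Fin n) ℝ) :
    Tendsto (matMeasureQuot N A) (𝓝[>] 0) (𝓝 (matMeasure N A)) := by
  obtain ⟨u, hu⟩ := exists_ne (0 : Fin n → ℝ)
  have hbdd : BddBelow (matMeasureQuot N A '' Ioi 0) :=
    ⟨_, by
      rintro _ ⟨h, hh, rfl⟩
      exact hN.neg_le_matMeasureQuot A (hN.map_inv_smul_self hu) hh⟩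
  have hlim := (hN.monotoneOn_matMeasureQuot A).tendsto_nhdsGT hbdd
  convert hlim using 2
  exact hlim.limUnder_eq

theorem neg_matMeasure_mul_le (hN : IsNorm N) (A : Matrix (Fin n) (Fin n) ℝ) (v : Fin n → ℝ) :
    -matMeasure N A * N v ≤ N (A *ᵥ v) := by
  rcases eq_or_ne v 0 with rfl | hv
  · simp [hN.map_zero]
  have : Nonempty (Fin n) := not_isEmpty_iff.1 fun _ => hv (Subsingleton.elim _ _)
  have hμ : -N (A *ᵥ ((N v)⁻¹ • v)) ≤ matMeasure N A :=
    ge_of_tendsto (hN.tendsto_matMeasureQuot A) <| eventually_mem_nhdsWithin.mono fun h hh =>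
      hN.neg_le_matMeasureQuot A (hN.map_inv_smul_self hv) hh
  rw [Matrix.mulVec_smul, hN.map_smul_of_nonneg (inv_nonneg.2 (hN.nonneg v)), neg_le,
    le_inv_mul_iff₀ (hN.pos hv)] at hμ
  linarith

theorem injective_mulVec_of_matMeasure_neg (hN : IsNorm N) {A : Matrix (Fin n) (Fin n) ℝ}
    (hA : matMeasure N A < 0) : Function.Injective A.mulVec := by
  intro u w huw
  by_contra hne
  have := hN.neg_matMeasure_mul_le A (u - w)
  rw [Matrix.mulVec_sub, huw, sub_self, hN.map_zero] at this
  nlinarith [hN.pos (sub_ne_zero.2 hne)]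

end IsNorm

theorem jac_mulVec {n : ℕ} (f : (Fin n → ℝ) → (Fin n → ℝ)) (x v : Fin n → ℝ) :
    jac f x *ᵥ v = fderiv ℝ f x v :=
  LinearMap.toMatrix'_mulVec _ v

namespace IsNorm

variable {n : ℕ} {N : (Fin n → ℝ) → ℝ}

theorem slope_comp_le (hN : IsNorm N) (A : Matrix (Fin n) (Fin n) ℝ) (u : ℝ → Fin n → ℝ)
    {τ z : ℝ} (hτz : τ < z) :
    slope (N ∘ u) τ z ≤ matMeasureQuot N A (z - τ) * N (u τ) + N (slope u τ z - A *ᵥ u τ) := by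
  set h := z - τ
  have hh : 0 < h := sub_pos.2 hτz
  have hsplit : u z = (1 + h • A) *ᵥ u τ + h • (slope u τ z - A *ᵥ u τ) := by
    rw [Matrix.one_add_smul_mulVec, smul_sub, slope_def_module, smul_smul,
      mul_inv_cancel₀ hh.ne', one_smul]
    abel
  have hbound : N (u z) ≤ opNorm N (1 + h • A) * N (u τ) + h * N (slope u τ z - A *ᵥ u τ) := by
    rw [← hN.map_smul_of_nonneg hh.le, hsplit]
    exact (hN.2.2 _ _).trans (add_le_add_left (hN.le_opNorm_mul _ _) _)
  calc slope (N ∘ u) τ z = (N (u z) - N (u τ)) / h := slope_def_field _ _ _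
    _ ≤ ((opNorm N (1 + h • A) - 1) * N (u τ) + h * N (slope u τ z - A *ᵥ u τ)) / h := by
        gcongr
        linarith
    _ = _ := by rw [matMeasureQuot]; field_simp

theorem eventually_slope_comp_lt [Nonempty (Fin n)] (hN : IsNorm N)
    {A : Matrix (Fin n) (Fin n) ℝ} {u : ℝ → Fin n → ℝ} {τ r : ℝ}
    (hu : HasDerivWithinAt u (A *ᵥ u τ) (Ioi τ) τ) (hr : matMeasure N A * N (u τ) < r) :
    ∀ᶠ z in 𝓝[>] τ, slope (N ∘ u) τ z < r := by
  have hshift : Tendsto (· - τ) (𝓝[>] τ) (𝓝[>] 0) := by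
    have h := (Filter.map_subRight_nhdsGT (c := τ) (a := τ)).le
    rwa [sub_self] at h
  have herr : Tendsto (fun z => N (slope u τ z - A *ᵥ u τ)) (𝓝[>] τ) (𝓝 0) := by
    have hslope := (hasDerivWithinAt_iff_tendsto_slope' (lt_irrefl τ)).1 hu
    have h := (hN.continuous.tendsto _).comp (hslope.sub_const (A *ᵥ u τ))
    rwa [sub_self, hN.map_zero] at h
  have hlim := (((hN.tendsto_matMeasureQuot A).comp hshift).mul_const (N (u τ))).add herr
  rw [add_zero] at hlim
  filter_upwards [hlim.eventually (gt_mem_nhds hr), self_mem_nhdsWithin] with z hz hτz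
  exact (hN.slope_comp_le A u hτz).trans_lt hz

theorem le_mul_exp_of_hasDerivWithinAt (hN : IsNorm N) {A : ℝ → Matrix (Fin n) (Fin n) ℝ}
    {c : ℝ} (hA : ∀ t, matMeasure N (A t) ≤ -c) {u : ℝ → Fin n → ℝ}
    (hu : ∀ t ∈ Ici (0 : ℝ), HasDerivWithinAt u (A t *ᵥ u t) (Ici 0) t) {t : ℝ} (ht : 0 ≤ t) :
    N (u t) ≤ N (u 0) * Real.exp (-c * t) := by
  rcases isEmpty_or_nonempty (Fin n) with _ | _
  · simp [Subsingleton.elim (u t) 0, Subsingleton.elim (u 0) 0, hN.map_zero]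
  have hcont : ContinuousOn (N ∘ u) (Icc 0 t) := hN.continuous.comp_continuousOn
    fun τ hτ => (hu τ hτ.1).continuousWithinAt.mono Icc_subset_Ici_self
  have hslope : ∀ τ ∈ Ico 0 t, ∀ r, -c * N (u τ) < r →
      ∃ᶠ z in 𝓝[>] τ, (z - τ)⁻¹ * ((N ∘ u) z - (N ∘ u) τ) < r := fun τ hτ r hr =>
    (hN.eventually_slope_comp_lt ((hu τ hτ.1).mono (Ioi_subset_Ici hτ.1))
      ((mul_le_mul_of_nonneg_right (hA τ) (hN.nonneg _)).trans_lt hr)).frequently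
  simpa [gronwallBound_ε0] using le_gronwallBound_of_liminf_deriv_right_le (ε := 0) hcont hslope
    le_rfl (fun _ _ => (add_zero _).ge) t ⟨ht, le_rfl⟩

theorem exists_forall_le_of_isProperMap (hN : IsNorm N) {g : (Fin n → ℝ) → (Fin n → ℝ)}
    (hg : IsProperMap g) (M : ℝ) : ∃ R, ∀ x, R ≤ N x → M ≤ N (g x) := by
  obtain ⟨R, hR⟩ := (hg.isCompact_preimage (hN.isCompact_setOf_le M)).bddAbove_image
    hN.continuous.continuousOn
  refine ⟨R + 1, fun x hx => ?_⟩
  by_contra! hlt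
  linarith [hR ⟨x, hlt.le, rfl⟩]

end IsNorm

section InverseFunction

variable {E : Type*} [NormedAddCommGroup E] [NormedSpace ℝ E] [FiniteDimensional ℝ E]
  {f : E → E}

theorem isOpenMap_of_injective_fderiv (hf : ContDiff ℝ 1 f)
    (hinj : ∀ x, Function.Injective (fderiv ℝ f x)) : IsOpenMap f :=
  isOpenMap_of_hasStrictFDerivAt_equiv
    (f' := fun x => (LinearEquiv.ofInjectiveEndo _ (hinj x)).toContinuousLinearEquiv)
    fun _ => hf.hasStrictFDerivAt one_ne_zero

theorem isProperMap_of_injective_fderiv (hf : ContDiff ℝ 1 f)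
    (hinj : ∀ x, Function.Injective (fderiv ℝ f x)) (hbij : Function.Bijective f) :
    IsProperMap f :=
  ((Equiv.ofBijective f hbij).toHomeomorphOfContinuousOpen hf.continuous
    (isOpenMap_of_injective_fderiv hf hinj)).isProperMap

end InverseFunction

/-- `V(x) = |f(x)|` is a positive definite, radially unbounded Lyapunov function
decreasing exponentially along trajectories. -/
theorem stmt_11 {n : ℕ} (N : (Fin n → ℝ) → ℝ) (hN : IsNorm N)
    (f : (Fin n → ℝ) → (Fin n → ℝ)) (hf : ContDiff ℝ 1 f)
    (c : ℝ) (hc : 0 < c) (hμ : ∀ x, matMeasure N (jac f x) ≤ -c)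
    (hbij : Function.Bijective f) (xs : Fin n → ℝ) (hxs : f xs = 0) :
    N (f xs) = 0 ∧
    (∀ x, x ≠ xs → 0 < N (f x)) ∧
    (∀ M : ℝ, ∃ R : ℝ, ∀ x, R ≤ N x → M ≤ N (f x)) ∧
    (∀ x : ℝ → (Fin n → ℝ),
      (∀ t ∈ Ici (0:ℝ), HasDerivWithinAt x (f (x t)) (Ici 0) t) →
      ∀ t ∈ Ici (0:ℝ), N (f (x t)) ≤ N (f (x 0)) * Real.exp (-c * t)) := by
  have hinj : ∀ x, Function.Injective (fderiv ℝ f x) := fun x => by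
    rw [← funext (jac_mulVec f x)]
    exact hN.injective_mulVec_of_matMeasure_neg ((hμ x).trans_lt (neg_neg_of_pos hc))
  refine ⟨by rw [hxs, hN.map_zero], fun x hx => ?_, ?_, fun x hx t ht => ?_⟩
  · exact hN.pos fun h => hx (hbij.1 (h.trans hxs.symm))
  · exact hN.exists_forall_le_of_isProperMap (isProperMap_of_injective_fderiv hf hinj hbij)
  · refine hN.le_mul_exp_of_hasDerivWithinAt (u := f ∘ x) (A := fun t => jac f (x t))
      (fun t => hμ (x t)) (fun t ht => ?_) ht
    rw [jac_mulVec]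
    exact (hf.differentiable one_ne_zero (x t)).hasFDerivAt.comp_hasDerivWithinAt t (hx t ht)
end

section
/- Let f : ℝⁿ → ℝⁿ be C¹ with μ(J(x)) ≤ −c < 0 for all x (μ the matrix measure of norm |·|). Then |f(x) − f(y)| ≥ c |x − y| for all x, y ∈ ℝⁿ. -/
open Matrix Filter Set Topology

/-!
Write `q_A(h) = (‖1 + h A‖ - 1) / h`, so that `μ(A) = lim_{h → 0⁺} q_A(h)`. Since `h ↦ ‖1 + h A‖`
is convex, `q_A` is monotone, hence `μ(A) = inf_{h > 0} q_A(h)`. By compactness of the segment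
`[y, x]` and continuity of the Jacobian, for every `c' < c` a single `h > 0` satisfies
`‖1 + h J(z)‖ ≤ 1 - h c'` for all `z ∈ [y, x]`. The mean value inequality for `z ↦ z + h f(z)` then
gives `‖x - y‖ - h ‖f x - f y‖ ≤ ‖(x + h f x) - (y + h f y)‖ ≤ (1 - h c') ‖x - y‖`, that is
`c' ‖x - y‖ ≤ ‖f x - f y‖`.
-/

section LogNorm

variable {E : Type*} [NormedAddCommGroup E] [NormedSpace ℝ E]

noncomputable def logNorm (A : E →L[ℝ] E) : ℝ :=
  limUnder (𝓝[>] (0 : ℝ)) (fun h => (‖1 + h • A‖ - 1) / h)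

theorem convexOn_norm_one_add_smul (A : E →L[ℝ] E) :
    ConvexOn ℝ univ (fun h : ℝ => ‖1 + h • A‖) := by
  have hline : (fun h : ℝ => ‖1 + h • A‖) = norm ∘ AffineMap.lineMap (1 : E →L[ℝ] E) (1 + A) := by
    ext h
    simp [AffineMap.lineMap_apply, add_comm]
  rw [hline]
  exact (convexOn_norm convex_univ).comp_affineMap _

section Nontrivial

variable [Nontrivial E]

theorem monotoneOn_logNorm_quot (A : E →L[ℝ] E) :
    MonotoneOn (fun h : ℝ => (‖1 + h • A‖ - 1) / h) (Ioi 0) := by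
  intro a ha b hb hab
  simpa using (convexOn_norm_one_add_smul A).secant_mono (mem_univ 0) (mem_univ a) (mem_univ b)
    ha.ne' hb.ne' hab

theorem neg_norm_le_logNorm_quot (A : E →L[ℝ] E) {h : ℝ} (hh : 0 < h) :
    -‖A‖ ≤ (‖1 + h • A‖ - 1) / h := by
  rw [le_div_iff₀ hh]
  have := norm_sub_norm_le (1 : E →L[ℝ] E) (-(h • A))
  rw [sub_neg_eq_add, norm_one, norm_neg, norm_smul, Real.norm_of_nonneg hh.le] at this
  linarith

theorem tendsto_logNorm (A : E →L[ℝ] E) :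
    Tendsto (fun h : ℝ => (‖1 + h • A‖ - 1) / h) (𝓝[>] 0) (𝓝 (logNorm A)) := by
  have hbdd : BddBelow ((fun h : ℝ => (‖1 + h • A‖ - 1) / h) '' Ioi 0) := by
    refine ⟨-‖A‖, ?_⟩
    rintro _ ⟨h, hh, rfl⟩
    exact neg_norm_le_logNorm_quot A hh
  have := (monotoneOn_logNorm_quot A).tendsto_nhdsGT hbdd
  rwa [logNorm, this.limUnder_eq]

theorem exists_uniform_norm_one_add_smul_lt {X : Type*} [TopologicalSpace X] {K : Set X}
    (hK : IsCompact K) {A : X → E →L[ℝ] E} (hA : Continuous A) {r : ℝ}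
    (hr : ∀ z ∈ K, logNorm (A z) < r) : ∃ h > 0, ∀ z ∈ K, ‖1 + h • A z‖ < 1 + h * r := by
  set U : Ioi (0 : ℝ) → Set X := fun h => {z | (‖1 + (h : ℝ) • A z‖ - 1) / h < r}
  have hU_open : ∀ h, IsOpen (U h) := fun h => isOpen_lt (by fun_prop) continuous_const
  have hU_anti : Antitone U := fun h₁ h₂ h12 z hz =>
    lt_of_le_of_lt (monotoneOn_logNorm_quot (A z) h₁.2 h₂.2 h12) hz
  have hKU : K ⊆ ⋃ h, U h := by
    intro z hz
    obtain ⟨h, hr, hh⟩ :=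
      (((tendsto_logNorm (A z)).eventually (gt_mem_nhds (hr z hz))).and self_mem_nhdsWithin).exists
    exact mem_iUnion.2 ⟨⟨h, hh⟩, hr⟩
  have : Nonempty (Ioi (0 : ℝ)) := nonempty_Ioi_subtype
  obtain ⟨⟨h, hh : 0 < h⟩, hKh⟩ := hK.elim_directed_cover U hU_open hKU hU_anti.directed_le
  refine ⟨h, hh, fun z hz => ?_⟩
  have := (div_lt_iff₀ hh).1 (hKh hz)
  linarith

end Nontrivial

theorem mul_norm_sub_le_norm_sub_of_logNorm_le {f : E → E} {f' : E → E →L[ℝ] E}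
    (hf : ∀ x, HasFDerivAt f (f' x) x) (hf' : Continuous f') {c : ℝ}
    (hμ : ∀ x, logNorm (f' x) ≤ -c) (x y : E) : c * ‖x - y‖ ≤ ‖f x - f y‖ := by
  rcases eq_or_ne x y with rfl | hxy
  · simp
  have : Nontrivial E := nontrivial_of_ne x y hxy
  suffices key : ∀ c' < c, c' * ‖x - y‖ ≤ ‖f x - f y‖ from
    le_of_tendsto ((tendsto_id.mono_left nhdsWithin_le_nhds).mul_const _)
      (eventually_nhdsWithin_of_forall (s := Iio c) key)
  intro c' hc'
  have hK : IsCompact (segment ℝ y x) := by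
    rw [segment_eq_image_lineMap]
    exact isCompact_Icc.image AffineMap.lineMap_continuous
  obtain ⟨h, hh, hbound⟩ := exists_uniform_norm_one_add_smul_lt hK hf' (r := -c')
    fun z _ => (hμ z).trans_lt (neg_lt_neg hc')
  have hg : ∀ z ∈ segment ℝ y x, HasFDerivWithinAt (fun z => z + h • f z) (1 + h • f' z)
      (segment ℝ y x) z :=
    fun z _ => ((hasFDerivAt_id z).add ((hf z).const_smul h)).hasFDerivWithinAt
  have hmvt := (convex_segment y x).norm_image_sub_le_of_norm_hasFDerivWithin_le hg
    (fun z hz => (hbound z hz).le) (left_mem_segment ℝ y x) (right_mem_segment ℝ y x)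
  have htri := norm_sub_le (x + h • f x - (y + h • f y)) (h • (f x - f y))
  rw [show x + h • f x - (y + h • f y) - h • (f x - f y) = x - y by module, norm_smul,
    Real.norm_of_nonneg hh.le] at htri
  refine le_of_mul_le_mul_left ?_ hh
  linarith

end LogNorm

theorem IsNorm.nonneg_s12 {n : ℕ} {N : (Fin n → ℝ) → ℝ} (hN : IsNorm N) (v : Fin n → ℝ) :
    0 ≤ N v := by
  have h := hN.2.2 v ((-1 : ℝ) • v)
  rw [hN.2.1, neg_one_smul, add_neg_cancel, (hN.1 0).2 rfl] at h
  norm_num at h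
  linarith

/-- `ℝⁿ` normed by `N` instead of the sup norm, so that Mathlib's normed-space theory applies. -/
def WithNorm {n : ℕ} (_N : (Fin n → ℝ) → ℝ) : Type := Fin n → ℝ

namespace WithNorm

variable {n : ℕ} (N : (Fin n → ℝ) → ℝ)

instance : AddCommGroup (WithNorm N) := inferInstanceAs (AddCommGroup (Fin n → ℝ))

instance : Module ℝ (WithNorm N) := inferInstanceAs (Module ℝ (Fin n → ℝ))

instance : FiniteDimensional ℝ (WithNorm N) := inferInstanceAs (FiniteDimensional ℝ (Fin n → ℝ))

instance : Norm (WithNorm N) := ⟨N⟩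

theorem normedSpaceCore (hN : IsNorm N) : NormedSpace.Core ℝ (WithNorm N) where
  norm_nonneg := hN.nonneg_s12
  norm_smul := hN.2.1
  norm_triangle := hN.2.2
  norm_eq_zero_iff := hN.1

variable [hN : Fact (IsNorm N)]

noncomputable instance : NormedAddCommGroup (WithNorm N) := .ofCore (normedSpaceCore N hN.out)

noncomputable instance : NormedSpace ℝ (WithNorm N) := .ofCore (normedSpaceCore N hN.out)

noncomputable def equiv : (Fin n → ℝ) ≃L[ℝ] WithNorm N :=
  LinearEquiv.toContinuousLinearEquiv (E := Fin n → ℝ) (F := WithNorm N) (.refl ℝ _)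

theorem opNorm_toMatrix' (T : (Fin n → ℝ) →L[ℝ] (Fin n → ℝ)) :
    opNorm N (LinearMap.toMatrix' T.toLinearMap) = ‖(equiv N).conjContinuousAlgEquiv T‖ := by
  have hball : Metric.closedBall (0 : WithNorm N) 1 = {v | N v ≤ 1} := by
    ext v
    exact mem_closedBall_zero_iff
  rw [← ContinuousLinearMap.sSup_unitClosedBall_eq_norm, opNorm, hball]
  simp only [LinearMap.toMatrix'_mulVec]
  rfl

theorem matMeasure_jac (f : (Fin n → ℝ) → (Fin n → ℝ)) (x : Fin n → ℝ) :
    matMeasure N (jac f x) = logNorm ((equiv N).conjContinuousAlgEquiv (fderiv ℝ f x)) := by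
  have (h : ℝ) : 1 + h • jac f x = LinearMap.toMatrix' (1 + h • fderiv ℝ f x).toLinearMap := by
    simp [jac]
  simp only [matMeasure, logNorm, this, opNorm_toMatrix', map_add, map_smul, map_one]

end WithNorm

theorem stmt_12_general {n : ℕ} (N : (Fin n → ℝ) → ℝ) (hN : IsNorm N)
    (f : (Fin n → ℝ) → (Fin n → ℝ)) (hf : ContDiff ℝ 1 f)
    (c : ℝ) (hμ : ∀ x, matMeasure N (jac f x) ≤ -c) :
    ∀ x y : Fin n → ℝ, c * N (x - y) ≤ N (f x - f y) := by
  have : Fact (IsNorm N) := ⟨hN⟩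
  set e := WithNorm.equiv N
  have hderiv (z : WithNorm N) : HasFDerivAt (e ∘ f ∘ e.symm)
      (e.conjContinuousAlgEquiv (fderiv ℝ f (e.symm z))) z :=
    e.hasFDerivAt.comp z ((hf.differentiable one_ne_zero _).hasFDerivAt.comp z e.symm.hasFDerivAt)
  have hcont : Continuous fun z => e.conjContinuousAlgEquiv (fderiv ℝ f (e.symm z)) :=
    e.conjContinuousAlgEquiv.continuous.comp
      ((hf.continuous_fderiv one_ne_zero).comp e.symm.continuous)
  intro x y
  exact mul_norm_sub_le_norm_sub_of_logNorm_le hderiv hcont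
    (fun z => WithNorm.matMeasure_jac N f _ ▸ hμ _) (e x) (e y)

/-- The co-Lipschitz bound: `|f(x) − f(y)| ≥ c|x − y|`. -/
theorem stmt_12 {n : ℕ} (N : (Fin n → ℝ) → ℝ) (hN : IsNorm N)
    (f : (Fin n → ℝ) → (Fin n → ℝ)) (hf : ContDiff ℝ 1 f)
    (c : ℝ) (hc : 0 < c) (hμ : ∀ x, matMeasure N (jac f x) ≤ -c) :
    ∀ x y : Fin n → ℝ, c * N (x - y) ≤ N (f x - f y) :=
  stmt_12_general N hN f hf c hμ
end
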